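/- Let 𝐊^w and 𝐊* be n×n real symmetric matrices with the eigenvalues of 𝐊* lying in [0,1] and λ_k(𝐊*) − λ_{k+1}(𝐊*) > 0. Then F̂_k(𝐊^w) − F̂_k(𝐊*) ≤ ( k/n + 2√2/(λ_k(𝐊*) − λ_{k+1}(𝐊*)) )·‖𝐊^w − 𝐊*‖_F. -/
import Mathlib


open Matrix

/-- Eigenvalues of a real symmetric matrix in nonincreasing order; `0` if not Hermitian. -/
noncomputable def eigs {n : ℕ} (M : Matrix (Fin n) (Fin n) ℝ) : Fin n → ℝ :=
  if h : M.IsHermitian then fun i => (h.eigenvalues ∘ Tuple.sort h.eigenvalues) i.rev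
  else 0

/-- Frobenius norm. -/
noncomputable def frobNorm {n m : ℕ} (A : Matrix (Fin n) (Fin m) ℝ) : ℝ :=
  Real.sqrt (∑ i, ∑ j, (A i j) ^ 2)

/-- `F̂_k(M) = (1/n) max { tr(Zᵀ M Z) : Z ∈ ℝ^{n×k}, ZᵀZ = I_k }`. -/
noncomputable def Fhat {n : ℕ} (k : ℕ) (M : Matrix (Fin n) (Fin n) ℝ) : ℝ :=
  (1 / (n : ℝ)) * sSup {x : ℝ | ∃ Z : Matrix (Fin n) (Fin k) ℝ,
    Zᵀ * Z = 1 ∧ x = (Zᵀ * M * Z).trace}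

lemma stmt10_trace_expand {n k : ℕ} (Z : Matrix (Fin n) (Fin k) ℝ)
    (M : Matrix (Fin n) (Fin n) ℝ) :
    (Zᵀ * M * Z).trace = ∑ p : Fin n × Fin n, (∑ j, Z p.1 j * Z p.2 j) * M p.1 p.2 := by
  have h : (Zᵀ * M * Z).trace = (M * (Z * Zᵀ)).trace := by
    rw [Matrix.trace_mul_comm, ← Matrix.mul_assoc, ← Matrix.mul_assoc,
      Matrix.trace_mul_comm (Z * Zᵀ) M, Matrix.mul_assoc]
  rw [h]
  simp only [Matrix.trace, Matrix.diag, Matrix.mul_apply, Matrix.transpose_apply,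
    Fintype.sum_prod_type, Finset.mul_sum, Finset.sum_mul]
  refine Finset.sum_congr rfl fun m _ => Finset.sum_congr rfl fun i _ =>
    Finset.sum_congr rfl fun j _ => by ring

lemma stmt10_sum_P_sq {n k : ℕ} (Z : Matrix (Fin n) (Fin k) ℝ) (hZ : Zᵀ * Z = 1) :
    ∑ p : Fin n × Fin n, (∑ j, Z p.1 j * Z p.2 j) ^ 2 = k := by
  have h1 : ∑ p : Fin n × Fin n, (∑ j, Z p.1 j * Z p.2 j) ^ 2
      = ((Z * Zᵀ) * (Z * Zᵀ)).trace := by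
    simp only [Matrix.trace, Matrix.diag, Matrix.mul_apply, Matrix.transpose_apply,
      Fintype.sum_prod_type]
    refine Finset.sum_congr rfl fun l _ => Finset.sum_congr rfl fun i _ => ?_
    rw [sq]
    congr 1
    exact Finset.sum_congr rfl fun j _ => mul_comm _ _
  rw [h1]
  have h2 : (Z * Zᵀ) * (Z * Zᵀ) = Z * ((Zᵀ * Z) * Zᵀ) := by simp [Matrix.mul_assoc]
  rw [h2, Matrix.trace_mul_comm]
  simp [Matrix.mul_assoc, hZ]

lemma stmt10_trace_le {n k : ℕ} (Z : Matrix (Fin n) (Fin k) ℝ) (hZ : Zᵀ * Z = 1)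
    (M : Matrix (Fin n) (Fin n) ℝ) :
    (Zᵀ * M * Z).trace ≤ Real.sqrt k * frobNorm M := by
  rw [stmt10_trace_expand]
  have cs := Finset.sum_mul_sq_le_sq_mul_sq Finset.univ
    (fun p : Fin n × Fin n => (∑ j, Z p.1 j * Z p.2 j)) (fun p => M p.1 p.2)
  have hP := stmt10_sum_P_sq Z hZ
  have hM : ∑ p : Fin n × Fin n, (M p.1 p.2) ^ 2 = ∑ i, ∑ j, (M i j) ^ 2 := by
    rw [Fintype.sum_prod_type]
  calc ∑ p : Fin n × Fin n, (∑ j, Z p.1 j * Z p.2 j) * M p.1 p.2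
      ≤ |∑ p : Fin n × Fin n, (∑ j, Z p.1 j * Z p.2 j) * M p.1 p.2| := le_abs_self _
    _ = Real.sqrt ((∑ p : Fin n × Fin n, (∑ j, Z p.1 j * Z p.2 j) * M p.1 p.2) ^ 2) :=
        (Real.sqrt_sq_eq_abs _).symm
    _ ≤ Real.sqrt ((∑ p : Fin n × Fin n, (∑ j, Z p.1 j * Z p.2 j) ^ 2) *
          ∑ p : Fin n × Fin n, (M p.1 p.2) ^ 2) := Real.sqrt_le_sqrt cs
    _ = Real.sqrt k * frobNorm M := by
        rw [hP, hM, Real.sqrt_mul (Nat.cast_nonneg k)]; rfl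

lemma stmt10_exists_Z {n k : ℕ} (hkn : k ≤ n) :
    ∃ Z : Matrix (Fin n) (Fin k) ℝ, Zᵀ * Z = 1 := by
  refine ⟨Matrix.of fun i j => if i = Fin.castLE hkn j then 1 else 0, ?_⟩
  ext a b
  simp only [Matrix.mul_apply, Matrix.transpose_apply, Matrix.of_apply,
    ite_mul, one_mul, zero_mul]
  rw [Finset.sum_ite_eq' Finset.univ (Fin.castLE hkn a)]
  simp [Fin.castLE_inj, Matrix.one_apply, eq_comm]

/-- For symmetric `𝐊^w, 𝐊*` with the eigenvalues of `𝐊*` in `[0,1]` and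
`λ_k(𝐊*) − λ_{k+1}(𝐊*) > 0`,
`F̂_k(𝐊^w) − F̂_k(𝐊*) ≤ (k/n + 2√2/(λ_k(𝐊*) − λ_{k+1}(𝐊*))) ‖𝐊^w − 𝐊*‖_F`. -/
theorem stmt10 {n : ℕ} (k : ℕ) (hk0 : 0 < k) (hkn : k < n)
    (Kw Kstar : Matrix (Fin n) (Fin n) ℝ)
    (hKw : Kw.IsHermitian) (hKs : Kstar.IsHermitian)
    (heig : ∀ i, eigs Kstar i ∈ Set.Icc (0 : ℝ) 1)
    (hgap : 0 < eigs Kstar ⟨k - 1, by omega⟩ - eigs Kstar ⟨k, hkn⟩) :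
    Fhat k Kw - Fhat k Kstar ≤
      ((k : ℝ) / (n : ℝ) +
        2 * Real.sqrt 2 / (eigs Kstar ⟨k - 1, by omega⟩ - eigs Kstar ⟨k, hkn⟩)) *
      frobNorm (Kw - Kstar) := by
  set gap := eigs Kstar ⟨k - 1, by omega⟩ - eigs Kstar ⟨k, hkn⟩ with hgapdef
  set D := Kw - Kstar with hD
  set Sw := {x : ℝ | ∃ Z : Matrix (Fin n) (Fin k) ℝ, Zᵀ * Z = 1 ∧ x = (Zᵀ * Kw * Z).trace}
  set Ss := {x : ℝ | ∃ Z : Matrix (Fin n) (Fin k) ℝ, Zᵀ * Z = 1 ∧ x = (Zᵀ * Kstar * Z).trace}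
  obtain ⟨Z0, hZ0⟩ := stmt10_exists_Z (n := n) (k := k) hkn.le
  have hne_w : Sw.Nonempty := ⟨_, Z0, hZ0, rfl⟩
  have hbdd_s : BddAbove Ss := by
    refine ⟨Real.sqrt k * frobNorm Kstar, fun x hx => ?_⟩
    obtain ⟨Z, hZ, rfl⟩ := hx
    exact stmt10_trace_le Z hZ Kstar
  have key : sSup Sw ≤ sSup Ss + Real.sqrt k * frobNorm D := by
    refine csSup_le hne_w ?_
    rintro x ⟨Z, hZ, rfl⟩
    have h2 : (Zᵀ * Kw * Z).trace = (Zᵀ * Kstar * Z).trace + (Zᵀ * D * Z).trace := by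
      rw [hD, Matrix.mul_sub, Matrix.sub_mul, Matrix.trace_sub]; ring
    rw [h2]
    have h3 : (Zᵀ * Kstar * Z).trace ≤ sSup Ss := le_csSup hbdd_s ⟨Z, hZ, rfl⟩
    have h4 := stmt10_trace_le Z hZ D
    linarith
  have hn : (0 : ℝ) < n := by exact_mod_cast hk0.trans hkn
  have hfrob : 0 ≤ frobNorm D := Real.sqrt_nonneg _
  have hk1 : (1:ℝ) ≤ k := by exact_mod_cast hk0
  have hsqrtk : Real.sqrt k ≤ k := by
    nlinarith [Real.sq_sqrt (Nat.cast_nonneg k : (0:ℝ) ≤ (k:ℕ)), Real.sqrt_nonneg (k:ℝ)]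
  have h5 : Fhat k Kw - Fhat k Kstar ≤ (1 / n) * (Real.sqrt k * frobNorm D) := by
    unfold Fhat
    rw [← mul_sub]
    have h1n : (0:ℝ) ≤ 1 / n := by positivity
    calc 1 / (n:ℝ) * (sSup Sw - sSup Ss) ≤ 1 / n * (Real.sqrt k * frobNorm D) :=
      mul_le_mul_of_nonneg_left (by linarith) h1n
    _ = _ := rfl
  have h6 : (1 / (n:ℝ)) * (Real.sqrt k * frobNorm D) ≤ ((k:ℝ)/n) * frobNorm D := by
    rw [show (1/(n:ℝ)) * (Real.sqrt k * frobNorm D) = (Real.sqrt k * frobNorm D)/n by ring,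
        show ((k:ℝ)/n) * frobNorm D = ((k:ℝ) * frobNorm D)/n by ring]
    gcongr
  have h7 : 0 ≤ 2 * Real.sqrt 2 / gap * frobNorm D := by positivity
  calc Fhat k Kw - Fhat k Kstar ≤ ((k:ℝ)/n) * frobNorm D := h5.trans h6
    _ ≤ ((k : ℝ) / (n : ℝ) + 2 * Real.sqrt 2 / gap) * frobNorm D := by
        rw [add_mul]; linarith
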